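/- Let p > 1 and set s_crit = max(1 − 2/(p−1), 0). Given s_crit < s < 1, there exist exponents 1 < q̃ ≤ 2 < q < ∞ and 1 ≤ r̃ ≤ 2 ≤ r ≤ ∞ satisfying the scaling condition 1/q + 2/r = 1 − s = 1/q̃ + 2/r̃ − 2 (i.e. the d = 2 Strichartz scaling condition) together with q > p q̃ and r ≥ p r̃. -/
import Mathlib


/-- **Existence of admissible Strichartz exponent pairs.**
Let `p > 1` and `s_crit = max(1 − 2/(p−1), 0)`.  Given `s_crit < s < 1`, there exist
exponents `1 < q̃ ≤ 2 < q < ∞` and `1 ≤ r̃ ≤ 2 ≤ r ≤ ∞` satisfying the `d = 2` Strichartz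
scaling condition `1/q + 2/r = 1 − s = 1/q̃ + 2/r̃ − 2`, together with `q > p q̃` and
`r ≥ p r̃`. -/
theorem exists_admissible_pairs (p : ℝ) (hp : 1 < p) (scrit : ℝ)
    (hscrit : scrit = max (1 - 2 / (p - 1)) 0)
    (s : ℝ) (hs1 : scrit < s) (hs2 : s < 1) :
    ∃ q qt r rt : ℝ,
      1 < qt ∧ qt ≤ 2 ∧ 2 < q ∧
      1 ≤ rt ∧ rt ≤ 2 ∧ 2 ≤ r ∧
      1 / q + 2 / r = 1 - s ∧
      1 / qt + 2 / rt - 2 = 1 - s ∧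
      p * qt < q ∧ p * rt ≤ r := by
  have hp1 : (0:ℝ) < p - 1 := by linarith
  have hs0 : 0 < s := lt_of_le_of_lt (le_max_right _ _) (hscrit ▸ hs1)
  have hkey : p * (1 - s) < 3 - s := by
    have h1 : 1 - 2 / (p - 1) < s := lt_of_le_of_lt (le_max_left _ _) (hscrit ▸ hs1)
    have h2 : (1 - s) * (p - 1) < 2 := by
      have := (lt_div_iff₀ hp1).mp (by linarith : 1 - s < 2 / (p - 1))
      linarith
    nlinarith [h2]
  set ε : ℝ := min s 1 / 2 with hε
  have hε0 : 0 < ε := by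
    have : 0 < min s 1 := lt_min hs0 one_pos
    positivity
  have hεs : ε ≤ s := by
    have : min s 1 ≤ s := min_le_left _ _
    simp only [hε]; linarith
  have hεh : ε ≤ 1 / 2 := by
    have : min s 1 ≤ 1 := min_le_right _ _
    simp only [hε]; linarith
  have h1ε : 0 < 1 - ε := by linarith
  have h2se : (1:ℝ) < 2 - s + ε := by linarith
  have h2se0 : (0:ℝ) < 2 - s + ε := by linarith
  have h1s : 0 < 1 - s := by linarith
  have h3s : 0 < 3 - s := by linarith
  refine ⟨(3 - s) / ((1 - s) * (1 - ε)), 1 / (1 - ε),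
          2 * (3 - s) / ((1 - s) * (2 - s + ε)), 2 / (2 - s + ε),
          ?_, ?_, ?_, ?_, ?_, ?_, ?_, ?_, ?_, ?_⟩
  · rw [lt_div_iff₀ h1ε]; linarith
  · rw [div_le_iff₀ h1ε]; linarith
  · rw [lt_div_iff₀ (by positivity)]; nlinarith [mul_pos hs0 hε0]
  · rw [le_div_iff₀ h2se0]; linarith
  · rw [div_le_iff₀ h2se0]; linarith
  · rw [le_div_iff₀ (by positivity)]; nlinarith [mul_pos hs0 h2se0]
  · field_simp
    ring
  · field_simp
    ring
  · rw [mul_one_div, div_lt_div_iff₀ h1ε (by positivity : (0:ℝ) < (1 - s) * (1 - ε))]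
    nlinarith [mul_pos h1s h1ε, hkey]
  · rw [mul_div_assoc', div_le_div_iff₀ h2se0 (by positivity : (0:ℝ) < (1 - s) * (2 - s + ε))]
    nlinarith [mul_pos h1s h2se0, hkey]
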